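/- Let p,q be integers with p+q odd. Then the number of points of the lattice L = {(1/(p²+q²))(rp+sq, sp−rq) : r,s ∈ ℤ} lying in the half-open unit square [0,1) × [0,1) is exactly p²+q². -/
import Mathlib

def psiHom (N : ℕ) (p q : ℤ) : (ZMod N × ZMod N) →+ (ZMod N × ZMod N) where
  toFun z := ((p : ZMod N) * z.1 + (q : ZMod N) * z.2,
              (p : ZMod N) * z.2 - (q : ZMod N) * z.1)
  map_zero' := by simp
  map_add' a b := by
    simp only [Prod.fst_add, Prod.snd_add, Prod.mk_add_mk, Prod.mk.injEq]
    (try constructor) <;> ring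

lemma psiHom_apply (N : ℕ) (p q : ℤ) (z : ZMod N × ZMod N) :
    psiHom N p q z = ((p : ZMod N) * z.1 + (q : ZMod N) * z.2,
              (p : ZMod N) * z.2 - (q : ZMod N) * z.1) := rfl

lemma ker_psiHom (N : ℕ) [NeZero N] (p q : ℤ) (hN : (N : ℤ) = p ^ 2 + q ^ 2) :
    (psiHom N p q).ker = (psiHom N p (-q)).range := by
  have hNz : (N : ℤ) ≠ 0 := by exact_mod_cast (NeZero.ne N)
  have hcast : ((p ^ 2 + q ^ 2 : ℤ) : ZMod N) = 0 := by
    rw [← hN]; exact_mod_cast ZMod.natCast_self N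
  ext z
  obtain ⟨x, y⟩ := z
  simp only [AddMonoidHom.mem_ker, AddMonoidHom.mem_range, psiHom_apply, Prod.mk.injEq,
    Prod.ext_iff, Prod.exists, Prod.fst_zero, Prod.snd_zero]
  constructor
  · rintro ⟨h1, h2⟩
    set X : ℤ := (x.val : ℤ) with hX
    set Y : ℤ := (y.val : ℤ) with hY
    have hx : ((X : ZMod N)) = x := by simp [hX, ZMod.natCast_val, ZMod.cast_id]
    have hy : ((Y : ZMod N)) = y := by simp [hY, ZMod.natCast_val, ZMod.cast_id]
    have d1 : (N : ℤ) ∣ p * X + q * Y := by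
      rw [← ZMod.intCast_zmod_eq_zero_iff_dvd]
      push_cast
      rw [hx, hy]; exact h1
    have d2 : (N : ℤ) ∣ p * Y - q * X := by
      rw [← ZMod.intCast_zmod_eq_zero_iff_dvd]
      push_cast
      rw [hx, hy]; exact h2
    obtain ⟨c, hc⟩ := d1
    obtain ⟨d, hd⟩ := d2
    refine ⟨(c : ZMod N), (d : ZMod N), ?_, ?_⟩
    · have hXeq : X = p * c - q * d := by
        have : (N : ℤ) * X = (N : ℤ) * (p * c - q * d) := by
          linear_combination p * hc - q * hd + X * hN
        exact mul_left_cancel₀ hNz this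
      rw [← hx, hXeq]; push_cast; ring
    · have hYeq : Y = q * c + p * d := by
        have : (N : ℤ) * Y = (N : ℤ) * (q * c + p * d) := by
          linear_combination q * hc + p * hd + Y * hN
        exact mul_left_cancel₀ hNz this
      rw [← hy, hYeq]; push_cast; ring
  · rintro ⟨u, v, hu, hv⟩
    push_cast at hu hv
    constructor
    · rw [← hu, ← hv]
      have : ((p:ZMod N)^2 + (q:ZMod N)^2) * u = 0 := by
        have := hcast; push_cast at this; rw [this]; ring
      linear_combination this
    · rw [← hu, ← hv]
      have : ((p:ZMod N)^2 + (q:ZMod N)^2) * v = 0 := by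
        have := hcast; push_cast at this; rw [this]; ring
      linear_combination this

lemma card_range_psiHom (N : ℕ) [NeZero N] (p q : ℤ) (hN : (N : ℤ) = p ^ 2 + q ^ 2) :
    Nat.card (psiHom N p q).range = N := by
  have hN' : (N : ℤ) = p ^ 2 + (-q) ^ 2 := by rw [hN]; ring
  have key : ∀ p' q' : ℤ, (N : ℤ) = p' ^ 2 + q' ^ 2 →
      Nat.card (psiHom N p' q').range * Nat.card (psiHom N p' (-q')).range = N * N := by
    intro p' q' h'
    have h1 := AddSubgroup.card_mul_index (psiHom N p' q').ker
    rw [AddSubgroup.index_ker, ker_psiHom N p' q' h'] at h1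
    have hG : Nat.card (ZMod N × ZMod N) = N * N := by
      simp [Nat.card_prod, Nat.card_zmod]
    rw [hG] at h1
    rw [mul_comm] at h1
    exact h1
  -- cardinalities of the two ranges agree via the equiv (a,b) ↦ (a,-b)
  have hsym : Nat.card (psiHom N p (-q)).range = Nat.card (psiHom N p q).range := by
    have hmap : (psiHom N p q).range.map
        ((AddEquiv.refl (ZMod N)).prodCongr (AddEquiv.neg (ZMod N))).toAddMonoidHom
        = (psiHom N p (-q)).range := by
      ext z
      simp only [AddSubgroup.mem_map, AddMonoidHom.mem_range, psiHom_apply]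
      constructor
      · rintro ⟨w, ⟨⟨a, b⟩, hw⟩, hz⟩
        refine ⟨(a, -b), ?_⟩
        rw [← hz, ← hw]
        simp [AddEquiv.prodCongr, Prod.ext_iff]
        push_cast
        (try constructor) <;> ring
      · rintro ⟨⟨a, b⟩, hz⟩
        refine ⟨psiHom N p q (a, -b), ⟨(a, -b), rfl⟩, ?_⟩
        rw [← hz]
        simp [psiHom_apply, AddEquiv.prodCongr, Prod.ext_iff]
        push_cast
        (try constructor) <;> ring
    rw [← hmap]
    exact Nat.card_congr ((AddSubgroup.equivMapOfInjective _ _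
      (AddEquiv.injective _)).symm.toEquiv)
  have h1 := key p q hN
  rw [hsym] at h1
  nlinarith [h1]

lemma val_intCast_of_bounds {N : ℕ} [NeZero N] {a : ℤ} (h0 : 0 ≤ a) (h1 : a < N) :
    ((((a : ZMod N)).val : ℤ)) = a := by
  lift a to ℕ using h0
  have hlt : a < N := by exact_mod_cast h1
  norm_cast
  exact ZMod.val_cast_of_lt hlt

/-- Let `p, q` be integers with `p+q` odd. The number of points of the
lattice `L = {(1/(p²+q²))(rp+sq, sp−rq) : r,s ∈ ℤ}` lying in `[0,1) × [0,1)` is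
exactly `p²+q²`. -/
theorem stmt8 (p q : ℤ) (h : Odd (p + q)) :
    ({w | ∃ r s : ℤ, w = (((r : ℝ) * p + s * q) / ((p : ℝ) ^ 2 + q ^ 2),
                          ((s : ℝ) * p - r * q) / ((p : ℝ) ^ 2 + q ^ 2))} ∩
        Set.Ico (0 : ℝ) 1 ×ˢ Set.Ico (0 : ℝ) 1).ncard = (p ^ 2 + q ^ 2).toNat := by
  have hpq : ¬(p = 0 ∧ q = 0) := by
    rintro ⟨rfl, rfl⟩
    simp [Int.odd_iff] at h
  have hn : 0 < p ^ 2 + q ^ 2 := by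
    rcases not_and_or.mp hpq with hp | hp
    · have h1 : 1 ≤ |p| := Int.one_le_abs (by omega)
      nlinarith [sq_nonneg q, sq_abs p]
    · have h1 : 1 ≤ |q| := Int.one_le_abs (by omega)
      nlinarith [sq_nonneg p, sq_abs q]
  set N : ℕ := (p ^ 2 + q ^ 2).toNat with hNdef
  have hNZ : (N : ℤ) = p ^ 2 + q ^ 2 := Int.toNat_of_nonneg hn.le
  have hN0 : N ≠ 0 := by omega
  haveI : NeZero N := ⟨hN0⟩
  have hnR : ((p : ℝ) ^ 2 + (q : ℝ) ^ 2) = (N : ℝ) := by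
    exact_mod_cast congrArg (fun x : ℤ => (x : ℝ)) hNZ.symm
  have hNR0 : (0 : ℝ) < (N : ℝ) := by
    have : 0 < N := Nat.pos_of_ne_zero hN0
    exact_mod_cast this
  set g : ZMod N × ZMod N → ℝ × ℝ :=
    fun z => ((z.1.val : ℝ) / (N : ℝ), (z.2.val : ℝ) / (N : ℝ)) with hg
  have hginj : Function.Injective g := by
    intro z z' hzz
    rw [hg, Prod.ext_iff] at hzz
    obtain ⟨h1, h2⟩ := hzz
    simp only [div_left_inj' hNR0.ne', Nat.cast_inj] at h1 h2
    exact Prod.ext (ZMod.val_injective N h1) (ZMod.val_injective N h2)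
  have hset : ({w | ∃ r s : ℤ, w = (((r : ℝ) * p + s * q) / ((p : ℝ) ^ 2 + q ^ 2),
                          ((s : ℝ) * p - r * q) / ((p : ℝ) ^ 2 + q ^ 2))} ∩
        Set.Ico (0 : ℝ) 1 ×ˢ Set.Ico (0 : ℝ) 1)
      = g '' ((psiHom N p q).range : Set (ZMod N × ZMod N)) := by
    ext ⟨w1, w2⟩
    simp only [Set.mem_inter_iff, Set.mem_setOf_eq, Set.mem_prod, Set.mem_Ico,
      Set.mem_image, SetLike.mem_coe, AddMonoidHom.mem_range, Prod.exists]
    constructor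
    · rintro ⟨⟨r, s, hw⟩, ⟨hw10, hw11⟩, hw20, hw21⟩
      rw [Prod.ext_iff] at hw
      obtain ⟨e1, e2⟩ := hw
      simp only at e1 e2
      rw [hnR] at e1 e2
      set a : ℤ := r * p + s * q with ha
      set b : ℤ := s * p - r * q with hb
      have ea : w1 = (a : ℝ) / N := by rw [e1, ha]; push_cast; ring_nf
      have eb : w2 = (b : ℝ) / N := by rw [e2, hb]; push_cast; ring_nf
      rw [ea] at hw10 hw11
      rw [eb] at hw20 hw21
      rw [le_div_iff₀ hNR0] at hw10 hw20
      rw [div_lt_one hNR0] at hw11 hw21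
      simp only [zero_mul] at hw10 hw20
      have haZ : 0 ≤ a ∧ a < (N : ℤ) := by
        constructor
        · exact_mod_cast hw10
        · exact_mod_cast hw11
      have hbZ : 0 ≤ b ∧ b < (N : ℤ) := by
        constructor
        · exact_mod_cast hw20
        · exact_mod_cast hw21
      refine ⟨(a : ZMod N), (b : ZMod N), ⟨(r : ZMod N), (s : ZMod N), ?_⟩, ?_⟩
      · rw [psiHom_apply]
        simp only [ha, hb]
        push_cast
        exact Prod.ext (by ring) (by ring)
      · rw [hg]
        simp only
        have v1 : ((((a : ZMod N)).val : ℤ)) = a := val_intCast_of_bounds haZ.1 haZ.2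
        have v2 : ((((b : ZMod N)).val : ℤ)) = b := val_intCast_of_bounds hbZ.1 hbZ.2
        rw [ea, eb, Prod.ext_iff]
        constructor
        · simp only; congr 1; exact_mod_cast congrArg (fun x : ℤ => (x : ℝ)) v1
        · simp only; congr 1; exact_mod_cast congrArg (fun x : ℤ => (x : ℝ)) v2
    · rintro ⟨zx, zy, ⟨x, y, hxy⟩, hgz⟩
      rw [psiHom_apply, Prod.mk.injEq] at hxy
      obtain ⟨hxy1, hxy2⟩ := hxy
      rw [hg] at hgz
      simp only [Prod.ext_iff] at hgz
      obtain ⟨e1, e2⟩ := hgz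
      set X : ℤ := (x.val : ℤ) with hX
      set Y : ℤ := (y.val : ℤ) with hY
      set A : ℤ := (zx.val : ℤ) with hA
      set B : ℤ := (zy.val : ℤ) with hB
      have hx : ((X : ZMod N)) = x := by simp [hX, ZMod.natCast_val, ZMod.cast_id]
      have hy : ((Y : ZMod N)) = y := by simp [hY, ZMod.natCast_val, ZMod.cast_id]
      have hAz : ((A : ZMod N)) = zx := by simp [hA, ZMod.natCast_val, ZMod.cast_id]
      have hBz : ((B : ZMod N)) = zy := by simp [hB, ZMod.natCast_val, ZMod.cast_id]
      have d1 : (N : ℤ) ∣ p * X + q * Y - A := by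
        rw [← ZMod.intCast_zmod_eq_zero_iff_dvd]
        push_cast
        rw [hx, hy, hAz, hxy1]
        ring
      have d2 : (N : ℤ) ∣ p * Y - q * X - B := by
        rw [← ZMod.intCast_zmod_eq_zero_iff_dvd]
        push_cast
        rw [hx, hy, hBz, hxy2]
        ring
      obtain ⟨c, hc⟩ := d1
      obtain ⟨d, hd⟩ := d2
      set r : ℤ := X - p * c + q * d with hr
      set s : ℤ := Y - q * c - p * d with hs
      have hra : r * p + s * q = A := by
        rw [hr, hs]; linear_combination hc + c * hNZ
      have hsb : s * p - r * q = B := by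
        rw [hr, hs]; linear_combination hd + d * hNZ
      have hvA : (0:ℤ) ≤ A ∧ A < N := by
        rw [hA]
        constructor
        · positivity
        · exact_mod_cast ZMod.val_lt zx
      have hvB : (0:ℤ) ≤ B ∧ B < N := by
        rw [hB]
        constructor
        · positivity
        · exact_mod_cast ZMod.val_lt zy
      refine ⟨⟨r, s, ?_⟩, ?_, ?_⟩
      · rw [← e1, ← e2, hnR, Prod.ext_iff]
        constructor
        · simp only; congr 1
          exact_mod_cast congrArg (fun x : ℤ => (x : ℝ)) hra.symm
        · simp only; congr 1
          exact_mod_cast congrArg (fun x : ℤ => (x : ℝ)) hsb.symm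
      · rw [← e1]
        constructor
        · positivity
        · rw [div_lt_one hNR0]
          exact_mod_cast ZMod.val_lt zx
      · rw [← e2]
        constructor
        · positivity
        · rw [div_lt_one hNR0]
          exact_mod_cast ZMod.val_lt zy
  rw [hset, Set.ncard_image_of_injective _ hginj]
  rw [← Nat.card_coe_set_eq]
  rw [SetLike.coe_sort_coe]
  exact card_range_psiHom N p q hNZ
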